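/- Let L denote the Rogers dilogarithm. Then L(√2 − 1) + L(1 − √2/2) = π²/8. -/

import Mathlib

/-- The real dilogarithm `Li₂(z) = ∑_{n=1}^∞ zⁿ/n²`. -/
noncomputable def dilog (z : ℝ) : ℝ := ∑' n : ℕ, z ^ (n + 1) / ((n : ℝ) + 1) ^ 2

/-- The (non-normalized) Rogers dilogarithm `L(z) = Li₂(z) + (1/2) log z log (1 - z)`. -/
noncomputable def rogersL (z : ℝ) : ℝ := dilog z + 1 / 2 * Real.log z * Real.log (1 - z)

open Real Set Filter Topology

lemma summable_base : Summable (fun n : ℕ => (1:ℝ) / ((n:ℝ)+1)^2) := by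
  have h := Real.summable_one_div_nat_pow.mpr (by norm_num : 1 < 2)
  have h2 := (summable_nat_add_iff (f := fun n : ℕ => (1:ℝ)/(n:ℝ)^2) 1).mpr h
  refine h2.congr fun n => by push_cast; ring

lemma summable_dilog {z : ℝ} (hz : |z| ≤ 1) :
    Summable (fun n : ℕ => z ^ (n+1) / ((n:ℝ)+1)^2) := by
  refine Summable.of_norm_bounded summable_base fun n => ?_
  have hn : (0:ℝ) < ((n:ℝ)+1)^2 := by positivity
  rw [norm_div, Real.norm_eq_abs, Real.norm_eq_abs, abs_pow, abs_of_pos hn]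
  gcongr
  exact pow_le_one₀ (abs_nonneg z) hz

lemma hasSum_dilog {z : ℝ} (hz : |z| ≤ 1) :
    HasSum (fun n : ℕ => z ^ (n+1) / ((n:ℝ)+1)^2) (dilog z) :=
  (summable_dilog hz).hasSum

lemma dilog_zero : dilog 0 = 0 := by
  simp [dilog]

lemma dilog_one : dilog 1 = π^2/6 := by
  have h := hasSum_zeta_two
  have h1 : HasSum (fun n : ℕ => (1:ℝ)/((n:ℝ)+1)^2) (π^2/6) := by
    have h3 := (hasSum_nat_add_iff (f := fun n : ℕ => (1:ℝ)/(n:ℝ)^2) 1).mpr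
      (by simpa using h)
    push_cast at h3
    exact h3
  have h2 : HasSum (fun n : ℕ => (1:ℝ)^(n+1)/((n:ℝ)+1)^2) (π^2/6) := by
    refine h1.congr fun n => by norm_num
  exact h2.tsum_eq

lemma dilog_continuousOn : ContinuousOn dilog (Icc (-1:ℝ) 1) := by
  refine continuousOn_tsum (fun i => ?_) summable_base (fun n x hx => ?_)
  · exact (continuous_pow _).continuousOn.div_const _
  · have hx1 : |x| ≤ 1 := abs_le.mpr ⟨hx.1, hx.2⟩
    have hn : (0:ℝ) < ((n:ℝ)+1)^2 := by positivity
    rw [norm_div, Real.norm_eq_abs, Real.norm_eq_abs, abs_pow, abs_of_pos hn]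
    gcongr
    exact pow_le_one₀ (abs_nonneg x) hx1

lemma hasDerivAt_dilog {z : ℝ} (hz : |z| < 1) (h0 : z ≠ 0) :
    HasDerivAt dilog (-Real.log (1 - z) / z) z := by
  set r : ℝ := (|z| + 1) / 2 with hr
  have h0r : 0 ≤ r := by positivity
  have hr1 : r < 1 := by rw [hr]; linarith
  have hzr : |z| < r := by rw [hr]; linarith
  have key : HasDerivAt (fun y => ∑' n : ℕ, y ^ (n+1) / ((n:ℝ)+1)^2)
      (∑' n : ℕ, z ^ n / ((n:ℝ)+1)) z := by
    refine hasDerivAt_tsum_of_isPreconnected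
      (g := fun (n : ℕ) y => y ^ (n+1) / ((n:ℝ)+1)^2) (g' := fun n y => y ^ n / ((n:ℝ)+1))
      (u := fun n => r ^ n)
      (summable_geometric_of_lt_one h0r hr1) (isOpen_Ioo (a := -r) (b := r))
      (convex_Ioo _ _).isPreconnected
      (fun n y _ => ?_) (fun n y hy => ?_) (y₀ := 0) ?_ ?_ ?_
    · have h := (hasDerivAt_pow (n+1) y).div_const (((n:ℝ)+1)^2)
      refine h.congr_deriv (Eq.symm ?_)
      have : ((n:ℝ)+1) ≠ 0 := by positivity
      push_cast
      field_simp
    · have hy' : |y| ≤ r := by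
        rw [abs_le]; exact ⟨hy.1.le, hy.2.le⟩
      have : ‖y ^ n / ((n:ℝ)+1)‖ ≤ |y| ^ n := by
        rw [norm_div, Real.norm_eq_abs, Real.norm_eq_abs, abs_pow]
        have h1 : (1:ℝ) ≤ |((n:ℝ)+1)| := by
          rw [abs_of_pos (by positivity)]; linarith [Nat.cast_nonneg (α := ℝ) n]
        calc |y|^n / |((n:ℝ)+1)| ≤ |y|^n / 1 := by
              apply div_le_div_of_nonneg_left (by positivity) (by norm_num) h1
          _ = |y|^n := by ring
      exact this.trans (pow_le_pow_left₀ (abs_nonneg y) hy' n)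
    · constructor <;> linarith [abs_nonneg z]
    · exact summable_zero.congr fun n => by simp
    · rw [mem_Ioo, ← abs_lt]; exact hzr
  have hsum : HasSum (fun n : ℕ => z ^ n / ((n:ℝ)+1)) (-Real.log (1-z) / z) := by
    have h2 := (hasSum_pow_div_log_of_abs_lt_one hz).div_const z
    have h3 : (fun n : ℕ => z^(n+1)/((n:ℝ)+1)/z) = fun n : ℕ => z^n/((n:ℝ)+1) := by
      funext n
      rw [pow_succ]
      field_simp
    rwa [h3] at h2
  have hfin : HasDerivAt dilog (∑' n : ℕ, z ^ n / ((n:ℝ)+1)) z := key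
  rwa [hsum.tsum_eq] at hfin

lemma dilog_duplication {s : ℝ} (hs : |s| ≤ 1) :
    dilog s + dilog (-s) = 1/2 * dilog (s^2) := by
  have h1 := hasSum_dilog hs
  have h2 := hasSum_dilog (z := -s) (by rwa [abs_neg])
  have h3 := h1.add h2
  have hsq : |s^2| ≤ 1 := by
    rw [abs_pow, ← one_pow 2]
    exact pow_le_pow_left₀ (abs_nonneg s) hs 2
  have h4 := (hasSum_dilog hsq).mul_left (1/2)
  have hinj : Function.Injective (fun k : ℕ => 2*k+1) := fun a b h => by
    simpa using h
  have hvanish : ∀ n : ℕ, n ∉ Set.range (fun k : ℕ => 2*k+1) →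
      (s ^ (n+1) / ((n:ℝ)+1)^2 + (-s) ^ (n+1) / ((n:ℝ)+1)^2) = 0 := by
    intro n hn
    have hev : Even n := by
      rcases Nat.even_or_odd n with h | h
      · exact h
      · obtain ⟨k, hk⟩ := h
        exact absurd ⟨k, by simpa using hk.symm⟩ hn
    have hodd : Odd (n+1) := Even.add_one hev
    rw [hodd.neg_pow]
    ring
  have h5 : HasSum ((fun n : ℕ => s ^ (n+1) / ((n:ℝ)+1)^2 + (-s) ^ (n+1) / ((n:ℝ)+1)^2)
      ∘ (fun k : ℕ => 2*k+1)) (dilog s + dilog (-s)) :=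
    (Function.Injective.hasSum_iff hinj hvanish).mpr h3
  have h6 : ((fun n : ℕ => s ^ (n+1) / ((n:ℝ)+1)^2 + (-s) ^ (n+1) / ((n:ℝ)+1)^2)
      ∘ (fun k : ℕ => 2*k+1)) = fun k : ℕ => 1/2 * ((s^2) ^ (k+1) / ((k:ℝ)+1)^2) := by
    funext k
    simp only [Function.comp_apply]
    have hodd2 : Even (2*k+1+1) := ⟨k+1, by ring⟩
    rw [hodd2.neg_pow]
    have : ((2*k+1 : ℕ) : ℝ) = 2*(k:ℝ)+1 := by push_cast; ring
    rw [this]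
    rw [show (2*k+1+1) = 2*(k+1) from by ring, pow_mul]
    have hk1 : ((k:ℝ)+1) ≠ 0 := by positivity
    field_simp
    ring
  rw [h6] at h5
  exact h5.unique h4

lemma hasDerivAt_one_sub (t : ℝ) : HasDerivAt (fun u : ℝ => 1 - u) (-1) t := by
  simpa using (hasDerivAt_id t).const_sub 1

lemma euler_reflection {x : ℝ} (hx0 : 0 < x) (hx1 : x < 1) :
    dilog x + dilog (1 - x) + Real.log x * Real.log (1 - x) = π^2/6 := by
  set F : ℝ → ℝ := fun t => dilog t + dilog (1-t) + Real.log t * Real.log (1-t) with hF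
  have hderiv : ∀ t ∈ Ioo (0:ℝ) 1, HasDerivAt F 0 t := by
    intro t ht
    obtain ⟨ht0, ht1⟩ := ht
    have habs : |t| < 1 := abs_lt.mpr ⟨by linarith, ht1⟩
    have habs' : |1 - t| < 1 := abs_lt.mpr ⟨by linarith, by linarith⟩
    have h1t : (0:ℝ) < 1 - t := by linarith
    have h1 := hasDerivAt_dilog habs (ne_of_gt ht0)
    have h2 : HasDerivAt (fun u : ℝ => dilog (1 - u)) (Real.log t / (1-t)) t := by
      have := (hasDerivAt_dilog habs' (ne_of_gt h1t)).comp t (hasDerivAt_one_sub t)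
      refine this.congr_deriv (Eq.symm ?_)
      rw [show (1:ℝ) - (1 - t) = t by ring]
      field_simp
    have hl2 : HasDerivAt (fun u : ℝ => Real.log (1-u)) (-(1-t)⁻¹) t := by
      have := (Real.hasDerivAt_log (ne_of_gt h1t)).comp t (hasDerivAt_one_sub t)
      refine this.congr_deriv (Eq.symm ?_)
      ring
    have h3 := (Real.hasDerivAt_log (ne_of_gt ht0)).mul hl2
    have htot := (h1.add h2).add h3
    refine htot.congr_deriv (Eq.symm ?_)
    field_simp
    ring
  have hconst : ∀ a ∈ Ioc (0:ℝ) x, F a = F x := by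
    intro a ha
    have := constant_of_has_deriv_right_zero (f := F) (a := a) (b := x)
      (fun t htt => ((hderiv t ⟨lt_of_lt_of_le ha.1 htt.1, lt_of_le_of_lt htt.2 hx1⟩
        ).continuousAt).continuousWithinAt)
      (fun t htt => ((hderiv t ⟨lt_of_lt_of_le ha.1 htt.1, lt_trans htt.2 hx1⟩
        ).hasDerivWithinAt))
    exact (this x ⟨ha.2, le_refl x⟩).symm
  have hA : Tendsto F (𝓝[>] (0:ℝ)) (𝓝 (F x)) := by
    refine tendsto_const_nhds.congr' ?_
    filter_upwards [Ioc_mem_nhdsGT hx0] with t ht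
    exact (hconst t ht).symm
  have l1 : Tendsto dilog (𝓝[>] (0:ℝ)) (𝓝 0) := by
    have h := tendsto_nhdsWithin_mono_left
      (fun y hy => ⟨by linarith [hy.1], hy.2⟩ : Ioc (0:ℝ) 1 ⊆ Icc (-1) 1)
      (dilog_continuousOn 0 (by norm_num))
    rw [nhdsWithin_Ioc_eq_nhdsGT (zero_lt_one (α := ℝ)), dilog_zero] at h
    exact h
  have l2 : Tendsto (fun t : ℝ => dilog (1-t)) (𝓝[>] (0:ℝ)) (𝓝 (π^2/6)) := by
    have hinner : Tendsto (fun t : ℝ => 1-t) (𝓝[>] (0:ℝ)) (𝓝[Icc (-1:ℝ) 1] 1) := by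
      apply tendsto_nhdsWithin_of_tendsto_nhds_of_eventually_within
      · have hc : Continuous (fun t : ℝ => 1 - t) := continuous_const.sub continuous_id
        have : Tendsto (fun t : ℝ => 1-t) (𝓝 (0:ℝ)) (𝓝 1) := by
          simpa using hc.tendsto 0
        exact this.mono_left nhdsWithin_le_nhds
      · filter_upwards [Ioc_mem_nhdsGT (zero_lt_one (α := ℝ))] with t ht
        exact ⟨by linarith [ht.2], by linarith [ht.1]⟩
    have := (dilog_continuousOn 1 (by norm_num)).tendsto.comp hinner
    rwa [dilog_one] at this
  have l3 : Tendsto (fun t : ℝ => Real.log t * Real.log (1-t)) (𝓝[>] (0:ℝ)) (𝓝 0) := by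
    have hg : Tendsto (fun t : ℝ => Real.log t * t * (-2)) (𝓝[>] (0:ℝ)) (𝓝 0) := by
      have h := tendsto_log_mul_rpow_nhdsGT_zero (one_pos (α := ℝ))
      simp only [Real.rpow_one] at h
      simpa using h.mul_const (-2)
    refine squeeze_zero_norm' ?_ hg
    filter_upwards [Ioo_mem_nhdsGT_of_mem (by norm_num : (0:ℝ) ∈ Ico (0:ℝ) (1/2))]
      with t ht
    obtain ⟨ht0, ht2⟩ := ht
    have h1t : (0:ℝ) < 1 - t := by linarith
    have hlt : Real.log t < 0 := Real.log_neg ht0 (by linarith)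
    have hl1t : Real.log (1-t) ≤ 0 := Real.log_nonpos (by linarith) (by linarith)
    have hbound : -Real.log (1-t) ≤ 2*t := by
      have := Real.log_le_sub_one_of_pos (x := (1-t)⁻¹) (by positivity)
      rw [Real.log_inv] at this
      have h2 : (1-t)⁻¹ - 1 = t/(1-t) := by field_simp; ring
      rw [h2] at this
      refine this.trans ?_
      rw [div_le_iff₀ h1t]
      nlinarith
    rw [Real.norm_eq_abs, abs_mul, abs_of_nonpos hlt.le, abs_of_nonpos hl1t]
    calc -Real.log t * -Real.log (1-t) ≤ -Real.log t * (2*t) := by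
          apply mul_le_mul_of_nonneg_left hbound (by linarith)
      _ = Real.log t * t * (-2) := by ring
  have hB : Tendsto F (𝓝[>] (0:ℝ)) (𝓝 (0 + π^2/6 + 0)) := (l1.add l2).add l3
  have h := tendsto_nhds_unique hA hB
  rw [hF] at h
  simpa using h

lemma landen {x : ℝ} (hx0 : 0 < x) (hx1 : x < 1) :
    dilog (-x) + dilog (x/(1+x)) + 1/2 * (Real.log (1+x))^2 = 0 := by
  set G : ℝ → ℝ := fun t => dilog (-t) + dilog (t/(1+t)) + 1/2 * (Real.log (1+t))^2 with hG
  have hderiv : ∀ t ∈ Ioo (0:ℝ) 1, HasDerivAt G 0 t := by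
    intro t ht
    obtain ⟨ht0, ht1⟩ := ht
    have h1t : (0:ℝ) < 1 + t := by linarith
    have hw0 : 0 < t/(1+t) := by positivity
    have hw1 : t/(1+t) < 1 := by rw [div_lt_one h1t]; linarith
    have h1 : HasDerivAt (fun u : ℝ => dilog (-u)) (-Real.log (1+t)/t) t := by
      have habs : |(-t)| < 1 := by rw [abs_neg, abs_of_pos ht0]; exact ht1
      have := (hasDerivAt_dilog habs (by simpa using ne_of_gt ht0)).comp t
        ((hasDerivAt_id t).neg)
      refine this.congr_deriv (Eq.symm ?_)
      rw [show (1:ℝ) - -t = 1 + t by ring]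
      field_simp
    have h2 : HasDerivAt (fun u : ℝ => dilog (u/(1+u)))
        (Real.log (1+t) * (1+t) / t * (1/(1+t)^2)) t := by
      have hinner : HasDerivAt (fun u : ℝ => u/(1+u)) (1/(1+t)^2) t := by
        have := (hasDerivAt_id t).div ((hasDerivAt_id t).const_add 1) (ne_of_gt h1t)
        refine this.congr_deriv (Eq.symm ?_)
        field_simp
        simp only [id_eq]
        rw [eq_div_iff (by positivity)]
        ring
      have habs : |t/(1+t)| < 1 := by rw [abs_of_pos hw0]; exact hw1
      have houter := hasDerivAt_dilog habs (ne_of_gt hw0)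
      have := houter.comp t hinner
      refine this.congr_deriv (Eq.symm ?_)
      rw [show (1:ℝ) - t/(1+t) = (1+t)⁻¹ by field_simp; ring, Real.log_inv]
      field_simp
    have h3 : HasDerivAt (fun u : ℝ => 1/2 * (Real.log (1+u))^2)
        (Real.log (1+t) / (1+t)) t := by
      have hlog : HasDerivAt (fun u : ℝ => Real.log (1+u)) ((1+t)⁻¹) t := by
        have := (Real.hasDerivAt_log (ne_of_gt h1t)).comp t ((hasDerivAt_id t).const_add 1)
        refine this.congr_deriv (Eq.symm ?_)
        ring
      have := (hlog.pow 2).const_mul (1/2 : ℝ)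
      refine this.congr_deriv (Eq.symm ?_)
      field_simp
      rw [show (2:ℕ) - 1 = 1 from rfl, pow_one]
      push_cast
      ring
    have htot := (h1.add h2).add h3
    refine htot.congr_deriv (Eq.symm ?_)
    field_simp
    ring
  have hconst : ∀ a ∈ Ioc (0:ℝ) x, G a = G x := by
    intro a ha
    have := constant_of_has_deriv_right_zero (f := G) (a := a) (b := x)
      (fun t htt => ((hderiv t ⟨lt_of_lt_of_le ha.1 htt.1, lt_of_le_of_lt htt.2 hx1⟩
        ).continuousAt).continuousWithinAt)
      (fun t htt => ((hderiv t ⟨lt_of_lt_of_le ha.1 htt.1, lt_trans htt.2 hx1⟩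
        ).hasDerivWithinAt))
    exact (this x ⟨ha.2, le_refl x⟩).symm
  have hA : Tendsto G (𝓝[>] (0:ℝ)) (𝓝 (G x)) := by
    refine tendsto_const_nhds.congr' ?_
    filter_upwards [Ioc_mem_nhdsGT hx0] with t ht
    exact (hconst t ht).symm
  have l1 : Tendsto (fun t : ℝ => dilog (-t)) (𝓝[>] (0:ℝ)) (𝓝 0) := by
    have hinner : Tendsto (fun t : ℝ => -t) (𝓝[>] (0:ℝ)) (𝓝[Icc (-1:ℝ) 1] 0) := by
      apply tendsto_nhdsWithin_of_tendsto_nhds_of_eventually_within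
      · have : Tendsto (fun t : ℝ => -t) (𝓝 (0:ℝ)) (𝓝 0) := by
          simpa using (continuous_neg (G := ℝ)).tendsto 0
        exact this.mono_left nhdsWithin_le_nhds
      · filter_upwards [Ioc_mem_nhdsGT (zero_lt_one (α := ℝ))] with t ht
        exact ⟨by linarith [ht.2], by linarith [ht.1]⟩
    have := (dilog_continuousOn 0 (by norm_num)).tendsto.comp hinner
    rwa [dilog_zero] at this
  have l2 : Tendsto (fun t : ℝ => dilog (t/(1+t))) (𝓝[>] (0:ℝ)) (𝓝 0) := by
    have hinner : Tendsto (fun t : ℝ => t/(1+t)) (𝓝[>] (0:ℝ)) (𝓝[Icc (-1:ℝ) 1] 0) := by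
      apply tendsto_nhdsWithin_of_tendsto_nhds_of_eventually_within
      · have hc : ContinuousAt (fun t : ℝ => t/(1+t)) 0 := by
          apply ContinuousAt.div continuousAt_id (by fun_prop)
          norm_num
        have := hc.tendsto
        simpa using this.mono_left nhdsWithin_le_nhds
      · filter_upwards [Ioc_mem_nhdsGT (zero_lt_one (α := ℝ))] with t ht
        have h1t : (0:ℝ) < 1 + t := by linarith [ht.1]
        constructor
        · have := div_nonneg (le_of_lt ht.1) (le_of_lt h1t)
          linarith
        · rw [div_le_one h1t]; linarith [ht.1]
    have := (dilog_continuousOn 0 (by norm_num)).tendsto.comp hinner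
    rwa [dilog_zero] at this
  have l3 : Tendsto (fun t : ℝ => 1/2 * (Real.log (1+t))^2) (𝓝[>] (0:ℝ)) (𝓝 0) := by
    have hc : ContinuousAt (fun t : ℝ => 1/2 * (Real.log (1+t))^2) 0 := by
      apply ContinuousAt.mul continuousAt_const
      apply ContinuousAt.pow
      exact (Real.continuousAt_log (by norm_num)).comp (by fun_prop)
    have := hc.tendsto
    simpa using this.mono_left nhdsWithin_le_nhds
  have hB : Tendsto G (𝓝[>] (0:ℝ)) (𝓝 (0 + 0 + 0)) := (l1.add l2).add l3
  have h := tendsto_nhds_unique hA hB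
  rw [hG] at h
  simpa using h

/-- Lima's two-term dilogarithm identity. -/
theorem lima_identity :
    rogersL (Real.sqrt 2 - 1) + rogersL (1 - Real.sqrt 2 / 2) = Real.pi ^ 2 / 8 := by
  have hr2 : Real.sqrt 2 ^ 2 = 2 := Real.sq_sqrt (by norm_num)
  have hr_pos : 0 < Real.sqrt 2 := Real.sqrt_pos.mpr (by norm_num)
  set r := Real.sqrt 2 with hrdef
  have hr_gt1 : 1 < r := by nlinarith
  have hr_lt : r < 3/2 := by nlinarith
  set c := Real.log 2 with hc
  set s := r / 2 with hs
  set x := r - 1 with hx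
  have hs0 : 0 < s := by rw [hs]; linarith
  have hs1 : s < 1 := by rw [hs]; linarith
  have hx0 : 0 < x := by rw [hx]; linarith
  have hx1 : x < 1 := by rw [hx]; linarith
  have hxs : s / (1 + s) = x := by
    rw [hs, hx]
    field_simp
    nlinarith
  have hs_sq : s ^ 2 = (1/2 : ℝ) := by
    rw [hs]
    field_simp
    linarith [hr2]
  set a := Real.log x with ha
  have hlogr : Real.log r = c / 2 := by
    rw [hrdef, Real.log_sqrt (by norm_num), hc]
  have hls : Real.log s = c / 2 - c := by
    rw [hs, Real.log_div (ne_of_gt hr_pos) two_ne_zero, hlogr]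
  have hymul : (1 : ℝ) - s = x * s := by
    rw [hs, hx]
    field_simp
    nlinarith
  have hly : Real.log (1 - s) = a + (c / 2 - c) := by
    rw [hymul, Real.log_mul (ne_of_gt hx0) (ne_of_gt hs0), hls, ha]
  have h1ps : (1 : ℝ) + s = s / x := by
    rw [hs, hx]
    rw [eq_div_iff (by intro h; nlinarith : r - 1 ≠ 0)]
    nlinarith
  have hl1ps : Real.log (1 + s) = (c / 2 - c) - a := by
    rw [h1ps, Real.log_div (ne_of_gt hs0) (ne_of_gt hx0), hls, ha]
  have h1mx : (1 : ℝ) - x = r * x := by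
    rw [hx]
    nlinarith
  have hl1mx : Real.log (1 - x) = c / 2 + a := by
    rw [h1mx, Real.log_mul (ne_of_gt hr_pos) (ne_of_gt hx0), hlogr, ha]
  have hlhalf : Real.log (1/2 : ℝ) = -c := by
    rw [show (1/2 : ℝ) = 2⁻¹ by norm_num, Real.log_inv, hc]
  have E1 := euler_reflection hs0 hs1
  have E2 := euler_reflection (by norm_num : (0:ℝ) < 1/2) (by norm_num : (1/2:ℝ) < 1)
  rw [show (1:ℝ) - 1/2 = 1/2 by norm_num, hlhalf] at E2
  have E3 := landen hs0 hs1
  rw [hxs, hl1ps] at E3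
  have E4 := dilog_duplication (s := s) (by rw [abs_of_pos hs0]; linarith)
  rw [hs_sq] at E4
  rw [hls, hly] at E1
  simp only [rogersL]
  rw [hl1mx, hly, show (1:ℝ) - (1 - s) = s by ring, hls]
  linear_combination E1 + E3 - E4 - (1/4) * E2
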